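/- Fix α > 0 and define W_α(x,t) := E_α(α x^{1/α}/(2 t^{1/2})) for x, t > 0, where E_α(λ) := (2/Γ(α/2)) ∫_λ^∞ ρ^{α-1} e^{-ρ²} dρ. Then W_α is infinitely differentiable on (0,∞)×(0,∞), satisfies ∂_t W_α(x,t) = x^{2(α-1)/α} ∂_{xx} W_α(x,t) for all x, t > 0, satisfies ∂_t W_α(x,t) = K_α(x,t) for all x, t > 0, and has the boundary behavior: for every t > 0, W_α(x,t) → 1 as x → 0⁺ and W_α(x,t) → 0 as x → ∞; and for every x > 0, W_α(x,t) → 0 as t → 0⁺. -/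

import Mathlib

/-
Put `λ = α x^{1/α} / (2 √t)`, so that `W_α(x,t) = E_α(λ)`, `∂_t λ = -λ/(2t)` and `∂_x λ = λ/(αx)`.
By the chain rule both first derivatives of `W_α` are multiples of `λ^α e^{-λ²}`, which is
`t Γ(α/2) K_α(x,t)`: this gives `∂_t W_α = K_α` and `∂_x W_α = -(2t/(αx)) K_α`. Since `K_α/x`
depends on `x` only through `exp(-α² x^{2/α}/(4t))`, differentiating once more gives
`∂_xx W_α = x^{2/α-2} K_α`, which is the equation. The boundary behaviour follows from
`E_α(0) = 1` (the Gamma integral), `E_α(λ) → 0` as `λ → ∞`, and the behaviour of `λ`.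
-/

open MeasureTheory Filter Set

/-- The generalized complementary (Gaussian) error function
`E_α(λ) = (2/Γ(α/2)) ∫_λ^∞ ρ^{α-1} e^{-ρ²} dρ`. -/
noncomputable def Ef (α lam : ℝ) : ℝ :=
  (2 / Real.Gamma (α / 2)) * ∫ ρ in Set.Ioi lam, ρ ^ (α - 1) * Real.exp (-ρ ^ 2)

/-- The kernel `K_α(x,t) = (α^α/(2^α Γ(α/2))) x t^{-(α/2+1)} exp(-α² x^{2/α}/(4t))`. -/
noncomputable def Kker (α x t : ℝ) : ℝ :=
  (α ^ α / (2 ^ α * Real.Gamma (α / 2))) * x * t ^ (-(α / 2 + 1)) *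
    Real.exp (-(α ^ 2) * x ^ (2 / α) / (4 * t))

/-- `W_α(x,t) = E_α(α x^{1/α}/(2 t^{1/2}))`. -/
noncomputable def Wf (α x t : ℝ) : ℝ :=
  Ef α (α * x ^ (1 / α) / (2 * t ^ ((1 : ℝ) / 2)))

open scoped Topology

section

variable {α : ℝ}

noncomputable def efIntegrand (α ρ : ℝ) : ℝ := ρ ^ (α - 1) * Real.exp (-ρ ^ 2)

lemma integrableOn_efIntegrand (hα : 0 < α) : IntegrableOn (efIntegrand α) (Ioi 0) := by
  have h := integrableOn_rpow_mul_exp_neg_rpow (by linarith : (-1 : ℝ) < α - 1) two_pos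
  simp only [Real.rpow_two] at h
  exact h

lemma integral_efIntegrand (hα : 0 < α) :
    ∫ ρ in Ioi 0, efIntegrand α ρ = Real.Gamma (α / 2) / 2 := by
  have h := integral_rpow_mul_exp_neg_rpow two_pos (by linarith : (-1 : ℝ) < α - 1)
  simp only [Real.rpow_two, sub_add_cancel] at h
  simpa only [efIntegrand, one_div, inv_mul_eq_div] using h

lemma continuousAt_efIntegrand {ρ : ℝ} (hρ : ρ ≠ 0) : ContinuousAt (efIntegrand α) ρ :=
  (Real.continuousAt_rpow_const ρ _ (Or.inl hρ)).mul (by fun_prop)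

lemma Ef_eq_one_sub_integral (hα : 0 < α) {b : ℝ} (hb : 0 ≤ b) :
    Ef α b = 1 - 2 / Real.Gamma (α / 2) * ∫ ρ in 0..b, efIntegrand α ρ := by
  have hΓ : Real.Gamma (α / 2) ≠ 0 := (Real.Gamma_pos_of_pos (by positivity)).ne'
  have hsplit : ∫ ρ in Ioi 0, efIntegrand α ρ =
      (∫ ρ in 0..b, efIntegrand α ρ) + ∫ ρ in Ioi b, efIntegrand α ρ := by
    have hint := integrableOn_efIntegrand hα
    rw [intervalIntegral.integral_of_le hb, ← setIntegral_union Ioc_disjoint_Ioi_same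
      measurableSet_Ioi (hint.mono_set Ioc_subset_Ioi_self)
      (hint.mono_set (Ioi_subset_Ioi hb)), Ioc_union_Ioi_eq_Ioi hb]
  rw [integral_efIntegrand hα] at hsplit
  rw [Ef, show ∫ ρ in Ioi b, ρ ^ (α - 1) * Real.exp (-ρ ^ 2) = _ - _ from
    eq_sub_of_add_eq' hsplit.symm]
  field_simp

lemma hasDerivAt_Ef (hα : 0 < α) {lam : ℝ} (hlam : 0 < lam) :
    HasDerivAt (Ef α) (-(2 / Real.Gamma (α / 2) * efIntegrand α lam)) lam := by
  have hFTC := intervalIntegral.integral_hasDerivAt_right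
    ((intervalIntegrable_iff_integrableOn_Ioc_of_le hlam.le).2
      ((integrableOn_efIntegrand hα).mono_set Ioc_subset_Ioi_self))
    ((Measurable.stronglyMeasurable (by unfold efIntegrand; fun_prop)).stronglyMeasurableAtFilter)
    (continuousAt_efIntegrand hlam.ne')
  have hEf : Ef α =ᶠ[𝓝 lam] fun b => 1 - 2 / Real.Gamma (α / 2) * ∫ ρ in 0..b, efIntegrand α ρ :=
    eventually_of_mem (Ioi_mem_nhds hlam) fun b hb => Ef_eq_one_sub_integral hα (le_of_lt hb)
  simpa only [sub_eq_add_neg, zero_add, neg_mul_eq_mul_neg]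
    using ((hFTC.const_mul _).const_sub 1).congr_of_eventuallyEq hEf

lemma contDiffOn_Ef (hα : 0 < α) : ContDiffOn ℝ (⊤ : ℕ∞) (Ef α) (Ioi 0) := by
  have hderiv : ∀ lam ∈ Ioi (0 : ℝ), HasDerivAt (Ef α) _ lam := fun _ h => hasDerivAt_Ef hα h
  have hsmooth : ContDiffOn ℝ (⊤ : ℕ∞) (efIntegrand α) (Ioi 0) := fun ρ hρ =>
    ((Real.contDiffAt_rpow_const_of_ne (ne_of_gt hρ)).mul (by fun_prop)).contDiffWithinAt
  refine (contDiffOn_infty_iff_deriv_of_isOpen isOpen_Ioi).2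
    ⟨fun lam h => (hderiv lam h).differentiableAt.differentiableWithinAt, ?_⟩
  exact (hsmooth.const_smul (2 / Real.Gamma (α / 2))).neg.congr fun lam h => (hderiv lam h).deriv

lemma tendsto_Ef_atTop (hα : 0 < α) : Tendsto (Ef α) atTop (𝓝 0) := by
  have h := ((intervalIntegral_tendsto_integral_Ioi 0 (integrableOn_efIntegrand hα)
    tendsto_id).const_mul (2 / Real.Gamma (α / 2))).const_sub 1
  rw [integral_efIntegrand hα, div_mul_div_comm, mul_comm 2, div_self (by positivity),
    sub_self] at h
  exact h.congr' <| eventually_of_mem (Ici_mem_atTop 0) fun b hb =>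
    (Ef_eq_one_sub_integral hα hb).symm

lemma tendsto_Ef_nhdsGT_zero (hα : 0 < α) : Tendsto (Ef α) (𝓝[>] 0) (𝓝 1) := by
  have hprim := intervalIntegral.continuousOn_primitive_interval (a := (0 : ℝ)) (b := 1)
    (μ := volume) (f := efIntegrand α)
    (by rw [uIcc_of_le zero_le_one, integrableOn_Icc_iff_integrableOn_Ioc]
        exact (integrableOn_efIntegrand hα).mono_set Ioc_subset_Ioi_self)
  have h := ((hprim 0 left_mem_uIcc).tendsto.const_mul (2 / Real.Gamma (α / 2))).const_sub 1
  rw [intervalIntegral.integral_same, mul_zero, sub_zero] at h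
  refine (h.mono_left (nhdsWithin_le_of_mem ?_)).congr' ?_
  · simpa only [uIcc_of_le zero_le_one] using Icc_mem_nhdsGT one_pos
  · exact eventually_mem_nhdsWithin.mono fun b hb =>
      (Ef_eq_one_sub_integral hα (le_of_lt hb)).symm

lemma hasDerivAt_Ef_comp (hα : 0 < α) {f : ℝ → ℝ} {c x : ℝ} (hf : HasDerivAt f (c * f x) x)
    (hfx : 0 < f x) :
    HasDerivAt (fun y => Ef α (f y))
      (-(c * (2 / Real.Gamma (α / 2) * f x ^ α * Real.exp (-f x ^ 2)))) x := by
  refine ((hasDerivAt_Ef hα hfx).comp x hf).congr_deriv ?_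
  rw [efIntegrand, Real.rpow_sub_one hfx.ne']
  field_simp

-- `Wf α x t = Ef α (similarityVar α x t)` holds definitionally.
noncomputable def similarityVar (α x t : ℝ) : ℝ := α * x ^ (1 / α) / (2 * t ^ ((1 : ℝ) / 2))

lemma similarityVar_pos (hα : 0 < α) {x t : ℝ} (hx : 0 < x) (ht : 0 < t) :
    0 < similarityVar α x t := by
  unfold similarityVar
  positivity

lemma hasDerivAt_similarityVar_x {x t : ℝ} (hx : 0 < x) :
    HasDerivAt (fun y => similarityVar α y t) ((α * x)⁻¹ * similarityVar α x t) x := by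
  refine (((Real.hasDerivAt_rpow_const (Or.inl hx.ne')).const_mul α).div_const _).congr_deriv ?_
  rw [similarityVar, Real.rpow_sub_one hx.ne']
  field_simp

lemma hasDerivAt_similarityVar_t {x t : ℝ} (ht : 0 < t) :
    HasDerivAt (fun s => similarityVar α x s) (-(2 * t)⁻¹ * similarityVar α x t) t := by
  refine ((hasDerivAt_const t (α * x ^ (1 / α))).div
    ((Real.hasDerivAt_rpow_const (Or.inl ht.ne')).const_mul 2) (by positivity)).congr_deriv ?_
  rw [similarityVar, Real.rpow_sub_one ht.ne']
  field_simp
  ring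

lemma similarityVar_sq {x t : ℝ} (hx : 0 < x) (ht : 0 < t) :
    similarityVar α x t ^ 2 = α ^ 2 * x ^ (2 / α) / (4 * t) := by
  rw [similarityVar, div_pow, mul_pow, mul_pow, ← Real.rpow_mul_natCast hx.le,
    ← Real.rpow_mul_natCast ht.le, Nat.cast_ofNat, one_div_mul_eq_div,
    show (1 : ℝ) / 2 * 2 = 1 by norm_num, Real.rpow_one]
  ring

lemma similarityVar_rpow (hα : 0 < α) {x t : ℝ} (hx : 0 < x) (ht : 0 < t) :
    similarityVar α x t ^ α = α ^ α * x / (2 ^ α * t ^ (α / 2)) := by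
  rw [similarityVar, Real.div_rpow (by positivity) (by positivity),
    Real.mul_rpow hα.le (by positivity), Real.mul_rpow two_pos.le (by positivity),
    ← Real.rpow_mul hx.le, ← Real.rpow_mul ht.le,
    one_div_mul_cancel hα.ne', Real.rpow_one, one_div_mul_eq_div]

lemma Kker_eq_similarityVar (hα : 0 < α) {x t : ℝ} (hx : 0 < x) (ht : 0 < t) :
    Kker α x t = 2 / Real.Gamma (α / 2) * similarityVar α x t ^ α *
      Real.exp (-similarityVar α x t ^ 2) / (2 * t) := by
  rw [similarityVar_rpow hα hx ht, similarityVar_sq hx ht, Kker, Real.rpow_neg ht.le,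
    Real.rpow_add ht, Real.rpow_one, neg_mul, neg_div]
  field_simp

lemma hasDerivAt_Wf_t (hα : 0 < α) {x t : ℝ} (hx : 0 < x) (ht : 0 < t) :
    HasDerivAt (fun s => Wf α x s) (Kker α x t) t := by
  refine (hasDerivAt_Ef_comp hα (hasDerivAt_similarityVar_t ht)
    (similarityVar_pos hα hx ht)).congr_deriv ?_
  rw [Kker_eq_similarityVar hα hx ht]
  field_simp

lemma hasDerivAt_Wf_x (hα : 0 < α) {x t : ℝ} (hx : 0 < x) (ht : 0 < t) :
    HasDerivAt (fun y => Wf α y t) (-(2 * t / α) * (Kker α x t / x)) x := by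
  refine (hasDerivAt_Ef_comp hα (hasDerivAt_similarityVar_x hx)
    (similarityVar_pos hα hx ht)).congr_deriv ?_
  rw [Kker_eq_similarityVar hα hx ht]
  field_simp

lemma hasDerivAt_Kker_div_self (hα : 0 < α) {x t : ℝ} (hx : 0 < x) :
    HasDerivAt (fun y => Kker α y t / y)
      (-(α / (2 * t)) * x ^ (2 / α - 1) * (Kker α x t / x)) x := by
  have hK : (fun y => Kker α y t / y) =ᶠ[𝓝 x] fun y => α ^ α / (2 ^ α * Real.Gamma (α / 2)) *
      t ^ (-(α / 2 + 1)) * Real.exp (-(α ^ 2) * y ^ (2 / α) / (4 * t)) :=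
    eventually_of_mem (Ioi_mem_nhds hx) fun y hy => by
      simp only [Kker]
      field_simp [(mem_Ioi.1 hy).ne']
  have hpow := (Real.hasDerivAt_rpow_const (p := 2 / α) (Or.inl hx.ne'))
  refine ((((hpow.const_mul (-(α ^ 2))).div_const (4 * t)).exp).const_mul _).congr_of_eventuallyEq
    hK |>.congr_deriv ?_
  rw [Kker]
  field_simp
  ring

lemma iteratedDeriv_two_Wf_x (hα : 0 < α) {x t : ℝ} (hx : 0 < x) (ht : 0 < t) :
    iteratedDeriv 2 (fun y => Wf α y t) x = x ^ (2 / α - 2) * Kker α x t := by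
  have hderiv : deriv (fun y => Wf α y t) =ᶠ[𝓝 x] fun y => -(2 * t / α) * (Kker α y t / y) :=
    eventually_of_mem (Ioi_mem_nhds hx) fun y hy => (hasDerivAt_Wf_x hα hy ht).deriv
  rw [iteratedDeriv_succ, iteratedDeriv_one, hderiv.deriv_eq,
    ((hasDerivAt_Kker_div_self hα hx).const_mul _).deriv,
    show (2 : ℝ) / α - 1 = 2 / α - 2 + 1 by ring, Real.rpow_add_one hx.ne']
  field_simp

lemma deriv_Wf_t_eq_rpow_mul_iteratedDeriv_two_x (hα : 0 < α) {x t : ℝ} (hx : 0 < x)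
    (ht : 0 < t) :
    deriv (fun s => Wf α x s) t =
      x ^ (2 * (α - 1) / α) * iteratedDeriv 2 (fun y => Wf α y t) x := by
  rw [(hasDerivAt_Wf_t hα hx ht).deriv, iteratedDeriv_two_Wf_x hα hx ht, ← mul_assoc,
    ← Real.rpow_add hx, show 2 * (α - 1) / α + (2 / α - 2) = 0 by field_simp; ring,
    Real.rpow_zero, one_mul]

lemma contDiffOn_similarityVar :
    ContDiffOn ℝ (⊤ : ℕ∞) (fun p : ℝ × ℝ => similarityVar α p.1 p.2) (Ioi 0 ×ˢ Ioi 0) := by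
  rintro ⟨x, t⟩ ⟨hx, ht⟩
  have hsqrt : 0 < t ^ ((1 : ℝ) / 2) := Real.rpow_pos_of_pos ht _
  refine ContDiffAt.contDiffWithinAt (ContDiffAt.div ?_ ?_ (by positivity))
  · exact contDiffAt_const.mul
      ((Real.contDiffAt_rpow_const_of_ne hx.ne').comp _ contDiffAt_fst)
  · exact contDiffAt_const.mul
      ((Real.contDiffAt_rpow_const_of_ne ht.ne').comp _ contDiffAt_snd)

lemma contDiffOn_Wf (hα : 0 < α) :
    ContDiffOn ℝ (⊤ : ℕ∞) (fun p : ℝ × ℝ => Wf α p.1 p.2) (Ioi 0 ×ˢ Ioi 0) :=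
  (contDiffOn_Ef hα).comp contDiffOn_similarityVar fun _ hp => similarityVar_pos hα hp.1 hp.2

lemma tendsto_similarityVar_x_nhdsGT_zero (hα : 0 < α) {t : ℝ} (ht : 0 < t) :
    Tendsto (fun x => similarityVar α x t) (𝓝[>] 0) (𝓝[>] 0) := by
  refine tendsto_nhdsWithin_iff.2
    ⟨?_, eventually_mem_nhdsWithin.mono fun x hx => similarityVar_pos hα hx ht⟩
  have h := (((Real.continuousAt_rpow_const 0 (1 / α) (Or.inr (by positivity))).tendsto.const_mul
    α).div_const (2 * t ^ ((1 : ℝ) / 2))).mono_left (nhdsWithin_le_nhds (s := Ioi 0))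
  rwa [Real.zero_rpow (by positivity), mul_zero, zero_div] at h

lemma tendsto_similarityVar_x_atTop (hα : 0 < α) {t : ℝ} (ht : 0 < t) :
    Tendsto (fun x => similarityVar α x t) atTop atTop := by
  have hc : 0 < α / (2 * t ^ ((1 : ℝ) / 2)) := by positivity
  refine ((tendsto_rpow_atTop (one_div_pos.2 hα)).const_mul_atTop hc).congr fun x => ?_
  rw [similarityVar]
  ring

lemma tendsto_similarityVar_t_nhdsGT_zero (hα : 0 < α) {x : ℝ} (hx : 0 < x) :
    Tendsto (fun t => similarityVar α x t) (𝓝[>] 0) atTop := by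
  have hc : 0 < α * x ^ (1 / α) / 2 := by positivity
  refine ((tendsto_rpow_neg_nhdsGT_zero (by norm_num : -((1 : ℝ) / 2) < 0)).const_mul_atTop
    hc).congr' (eventually_mem_nhdsWithin.mono fun t ht => ?_)
  simp only [similarityVar, Real.rpow_neg (le_of_lt ht)]
  ring

end

theorem stmt2 (α : ℝ) (hα : 0 < α) :
    ContDiffOn ℝ (⊤ : ℕ∞) (fun p : ℝ × ℝ => Wf α p.1 p.2) (Set.Ioi 0 ×ˢ Set.Ioi 0) ∧
    (∀ x t : ℝ, 0 < x → 0 < t →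
      deriv (fun s => Wf α x s) t =
        x ^ (2 * (α - 1) / α) * iteratedDeriv 2 (fun y => Wf α y t) x) ∧
    (∀ x t : ℝ, 0 < x → 0 < t → deriv (fun s => Wf α x s) t = Kker α x t) ∧
    (∀ t : ℝ, 0 < t →
      Tendsto (fun x => Wf α x t) (nhdsWithin 0 (Set.Ioi 0)) (nhds 1)) ∧
    (∀ t : ℝ, 0 < t → Tendsto (fun x => Wf α x t) atTop (nhds 0)) ∧
    (∀ x : ℝ, 0 < x →
      Tendsto (fun s => Wf α x s) (nhdsWithin 0 (Set.Ioi 0)) (nhds 0)) :=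
  ⟨contDiffOn_Wf hα,
    fun _ _ hx ht => deriv_Wf_t_eq_rpow_mul_iteratedDeriv_two_x hα hx ht,
    fun _ _ hx ht => (hasDerivAt_Wf_t hα hx ht).deriv,
    fun _ ht => (tendsto_Ef_nhdsGT_zero hα).comp (tendsto_similarityVar_x_nhdsGT_zero hα ht),
    fun _ ht => (tendsto_Ef_atTop hα).comp (tendsto_similarityVar_x_atTop hα ht),
    fun _ hx => (tendsto_Ef_atTop hα).comp (tendsto_similarityVar_t_nhdsGT_zero hα hx)⟩
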